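/- Let r₀ : ℝ → ℝ be C¹, bounded, with bounded derivative, and suppose the limit r₀(+∞) := lim_{x→+∞} r₀(x) exists and is finite, and that there exists α ∈ ℝ with r₀'(α)·( r₀(α) + r₀(+∞) ) < 0; or suppose the limit r₀(−∞) := lim_{x→−∞} r₀(x) exists and is finite and there exists β ∈ ℝ with r₀'(β)·( r₀(β) + r₀(−∞) ) > 0. Then the diagonal system ∂ₜr + k(r−ℓ)·∂ₓr = 0, ∂ₜℓ − k(r−ℓ)·∂ₓℓ = 0 with data r(0,·) = r₀, ℓ(0,·) = −r₀ admits no global smooth solution: there do not exist a C¹ solution (r,ℓ) on all of [0,∞)×ℝ together with C¹ forward and backward characteristic families x₁, x₂ (with continuous mixed second partials, ∂ₜx₁ = k(r−ℓ)∘x₁, ∂ₜx₂ = −k(r−ℓ)∘x₂, x₁(0,α') = α', x₂(0,β') = β') and C¹ intersection functions β(t,α'), α(t,β') satisfying x₁(t,α') = x₂(t, β(t,α')) and x₂(t,β') = x₁(t, α(t,β')) for all t ≥ 0 and all α', β' ∈ ℝ. -/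

import Mathlib

/-!
The Riemann invariant `r` is transported along the forward characteristics and `ℓ` along the
backward ones, and both families move with speed `k ≥ 1`. Hence the backward characteristic met
by the forward one from `a` at time `t` starts at a point `≥ a + 2t`, so the speed
`k (r₀ a + r₀ (B t a))` of the forward characteristic tends to `k (r₀ a + r₀(+∞))`. Since `k v`
increases with `|v|`, the condition at `α` makes the characteristic from `α` asymptotically
faster than the one from a point slightly to its right; the two must meet, although they carry
different values of `r`. The condition at `β` is the mirror image under `x ↦ -x`.
-/

open Filter

/-- The primitive `L` of the wave velocity `Q(ξ) = √(1+ξ²)` with `L 0 = 0`. -/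
noncomputable def L (u : ℝ) : ℝ := (u * Real.sqrt (1 + u ^ 2) + Real.arsinh u) / 2

open Set Topology

lemma L_neg (u : ℝ) : L (-u) = -L u := by
  simp only [L, neg_sq, Real.arsinh_neg]
  ring

lemma half_le_L {u : ℝ} (hu : 0 ≤ u) : u / 2 ≤ L u := by
  have h₁ : u ≤ u * √(1 + u ^ 2) := le_mul_of_one_le_right hu (Real.one_le_sqrt.2 (by nlinarith))
  have h₂ : 0 ≤ Real.arsinh u := Real.arsinh_nonneg_iff.2 hu
  unfold L
  linarith

lemma monotoneOn_L : MonotoneOn L (Ici 0) := by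
  intro u (hu : 0 ≤ u) v (hv : 0 ≤ v) huv
  unfold L
  gcongr

lemma abs_L (u : ℝ) : |L u| = L |u| := by
  rcases le_total 0 u with hu | hu
  · rw [abs_of_nonneg hu, abs_of_nonneg (by linarith [half_le_L hu])]
  · rw [abs_of_nonpos hu, ← abs_neg, ← L_neg,
      abs_of_nonneg (by linarith [half_le_L (neg_nonneg.2 hu)])]

lemma continuous_L : Continuous L :=
  ((continuous_id.mul (by fun_prop)).add Real.continuous_arsinh).div_const 2

lemma tendsto_L_atTop : Tendsto L atTop atTop :=
  tendsto_atTop_mono' _ ((eventually_ge_atTop 0).mono fun _ hu => half_le_L hu)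
    (tendsto_id.atTop_div_const two_pos)

lemma L_surjective : Function.Surjective L := by
  refine continuous_L.surjective tendsto_L_atTop ?_
  have : Tendsto (fun u => -L (-u)) atBot atBot :=
    tendsto_neg_atTop_atBot.comp (tendsto_L_atTop.comp tendsto_neg_atBot_atTop)
  simpa only [L_neg, neg_neg] using this

lemma exists_neg_two_mul_L_eq (v : ℝ) : ∃ u, -(2 * L u) = v := by
  obtain ⟨u, hu⟩ := L_surjective (-(v / 2))
  exact ⟨u, by rw [hu]; ring⟩

def IsWaveSpeed (k : ℝ → ℝ) : Prop := ∀ u : ℝ, k (-(2 * L u)) = Real.sqrt (1 + u ^ 2)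

namespace IsWaveSpeed

variable {k : ℝ → ℝ}

lemma one_le (hk : IsWaveSpeed k) (v : ℝ) : 1 ≤ k v := by
  obtain ⟨u, rfl⟩ := exists_neg_two_mul_L_eq v
  rw [hk]
  exact Real.one_le_sqrt.2 (by nlinarith)

lemma lt_of_abs_lt (hk : IsWaveSpeed k) {v w : ℝ} (h : |v| < |w|) : k v < k w := by
  obtain ⟨u, rfl⟩ := exists_neg_two_mul_L_eq v
  obtain ⟨u', rfl⟩ := exists_neg_two_mul_L_eq w
  rw [abs_neg, abs_neg, abs_mul, abs_mul, abs_two, abs_L, abs_L] at h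
  have hu : |u| < |u'| := lt_of_not_ge fun h' => by
    linarith [monotoneOn_L (abs_nonneg u') (abs_nonneg u) h']
  rw [hk, hk]
  exact Real.sqrt_lt_sqrt (by positivity) (by nlinarith [sq_lt_sq.2 hu])

end IsWaveSpeed

lemma hasDerivAt_comp_curve {F : ℝ → ℝ → ℝ} {γ : ℝ → ℝ} {t v : ℝ}
    (hF : DifferentiableAt ℝ (fun p : ℝ × ℝ => F p.1 p.2) (t, γ t)) (hγ : HasDerivAt γ v t) :
    HasDerivAt (fun s => F s (γ s))
      (deriv (fun s => F s (γ t)) t + v * deriv (fun y => F t y) (γ t)) t := by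
  have hG := hF.hasFDerivAt
  set G := fderiv ℝ (fun p : ℝ × ℝ => F p.1 p.2) (t, γ t)
  have ht := hG.comp_hasDerivAt t ((hasDerivAt_id' t).prodMk (hasDerivAt_const t (γ t)))
  have hx := hG.comp_hasDerivAt (γ t) ((hasDerivAt_const (γ t) t).prodMk (hasDerivAt_id' (γ t)))
  have hc := hG.comp_hasDerivAt t ((hasDerivAt_id' t).prodMk hγ)
  simp only [Function.comp_def] at ht hx hc
  have hsplit : G (1, v) = G (1, 0) + v * G (0, 1) := by
    rw [← smul_eq_mul, ← map_smul, ← map_add]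
    simp
  rwa [ht.deriv, hx.deriv, ← hsplit]

lemma apply_curve_eq_of_transport {F : ℝ → ℝ → ℝ} {γ v : ℝ → ℝ}
    (hF : ContDiffOn ℝ 1 (fun p : ℝ × ℝ => F p.1 p.2) {p : ℝ × ℝ | 0 ≤ p.1})
    (hγ : ∀ t, 0 ≤ t → HasDerivAt γ (v t) t)
    (hPDE : ∀ t, 0 ≤ t →
      deriv (fun s => F s (γ t)) t + v t * deriv (fun y => F t y) (γ t) = 0)
    {t : ℝ} (ht : 0 ≤ t) : F t (γ t) = F 0 (γ 0) := by
  rcases ht.eq_or_lt with rfl | ht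
  · rfl
  have hcont : ContinuousOn (fun s => F s (γ s)) (Icc 0 t) :=
    hF.continuousOn.comp (continuousOn_id.prodMk fun s hs =>
      (hγ s hs.1).continuousAt.continuousWithinAt) fun s hs => hs.1
  have hderiv : ∀ s ∈ Ioo 0 t, HasDerivAt (fun s => F s (γ s)) 0 s := fun s hs => by
    have hnhds : {p : ℝ × ℝ | 0 ≤ p.1} ∈ 𝓝 (s, γ s) :=
      mem_of_superset ((isOpen_lt continuous_const continuous_fst).mem_nhds hs.1)
        fun _ hp => le_of_lt (α := ℝ) hp
    simpa only [hPDE s hs.1.le] using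
      hasDerivAt_comp_curve ((hF.differentiableOn one_ne_zero).differentiableAt hnhds)
        (hγ s hs.1.le)
  obtain ⟨c, -, hc⟩ := exists_hasDerivAt_eq_slope _ (fun _ => 0) ht hcont hderiv
  rw [eq_div_iff (by linarith), zero_mul] at hc
  linarith

lemma add_le_of_one_le_deriv {γ v : ℝ → ℝ} (hγ : ∀ t, 0 ≤ t → HasDerivAt γ (v t) t)
    (hv : ∀ t, 0 ≤ t → 1 ≤ v t) {t : ℝ} (ht : 0 ≤ t) : γ 0 + t ≤ γ t := by
  have := (convex_Ici 0).mul_sub_le_image_sub_of_le_deriv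
    (fun s hs => (hγ s hs).continuousAt.continuousWithinAt)
    (fun s hs => (hγ s (interior_subset hs)).differentiableAt.differentiableWithinAt)
    (fun s hs => (hγ s (interior_subset hs)).deriv ▸ hv s (interior_subset hs))
    0 self_mem_Ici t ht ht
  linarith

lemma tendsto_atBot_of_tendsto_deriv_neg {f f' : ℝ → ℝ} {c : ℝ}
    (hf : ∀ t, 0 ≤ t → HasDerivAt f (f' t) t) (hf' : Tendsto f' atTop (𝓝 c)) (hc : c < 0) :
    Tendsto f atTop atBot := by
  obtain ⟨T, hT⟩ :=
    eventually_atTop.1 (hf'.eventually (eventually_lt_nhds (by linarith : c < c / 2)))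
  set T₀ := max T 0
  have hf₀ : ∀ s ∈ Ici T₀, HasDerivAt f (f' s) s := fun s hs => hf s ((le_max_right _ _).trans hs)
  have hbound : ∀ y ∈ Ici T₀, f y - f T₀ ≤ c / 2 * (y - T₀) :=
    fun y hy => (convex_Ici T₀).image_sub_le_mul_sub_of_deriv_le
      (fun s hs => (hf₀ s hs).continuousAt.continuousWithinAt)
      (fun s hs => (hf₀ s (interior_subset hs)).differentiableAt.differentiableWithinAt)
      (fun s hs => (hf₀ s (interior_subset hs)).deriv ▸
        (hT s ((le_max_left _ _).trans (interior_subset hs))).le)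
      T₀ self_mem_Ici y hy hy
  refine tendsto_atBot_mono' _ ((eventually_ge_atTop T₀).mono fun y hy =>
    (by linarith [hbound y hy] : f y ≤ f T₀ - c / 2 * T₀ + c / 2 * y)) ?_
  exact tendsto_atBot_add_const_left _ _ (tendsto_id.const_mul_atTop_of_neg (by linarith))

lemma exists_eq_of_tendsto_deriv_lt {γ₁ γ₂ v₁ v₂ : ℝ → ℝ} {c₁ c₂ : ℝ}
    (h₁ : ∀ t, 0 ≤ t → HasDerivAt γ₁ (v₁ t) t) (h₂ : ∀ t, 0 ≤ t → HasDerivAt γ₂ (v₂ t) t)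
    (hv₁ : Tendsto v₁ atTop (𝓝 c₁)) (hv₂ : Tendsto v₂ atTop (𝓝 c₂)) (hc : c₂ < c₁)
    (h0 : γ₁ 0 < γ₂ 0) : ∃ t, 0 ≤ t ∧ γ₁ t = γ₂ t := by
  have hD : ∀ t, 0 ≤ t → HasDerivAt (fun s => γ₂ s - γ₁ s) (v₂ t - v₁ t) t :=
    fun t ht => (h₂ t ht).sub (h₁ t ht)
  obtain ⟨T, hT, hT0⟩ := (((tendsto_atBot_of_tendsto_deriv_neg hD (hv₂.sub hv₁)
    (sub_neg.2 hc)).eventually (eventually_lt_atBot 0)).and (eventually_ge_atTop 0)).exists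
  obtain ⟨t, ht, hzero⟩ := intermediate_value_Icc' hT0
    (fun s hs => (hD s hs.1).continuousAt.continuousWithinAt)
    (⟨hT.le, by linarith⟩ : (0 : ℝ) ∈ Icc (γ₂ T - γ₁ T) (γ₂ 0 - γ₁ 0))
  exact ⟨t, ht.1, by linarith [hzero]⟩

lemma exists_gt_lt_of_hasDerivAt_neg {f : ℝ → ℝ} {a d : ℝ} (hf : HasDerivAt f d a) (hd : d < 0) :
    ∃ b, a < b ∧ f b < f a := by
  have hslope : ∀ᶠ b in 𝓝[>] a, slope f a b < 0 :=
    ((hasDerivAt_iff_tendsto_slope.1 hf).mono_left (nhdsGT_le_nhdsNE a)).eventually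
      (eventually_lt_nhds hd)
  obtain ⟨b, hb, hab⟩ := (hslope.and self_mem_nhdsWithin).exists
  exact ⟨b, hab, (slope_neg_iff_of_le hab.le).1 hb⟩

lemma tendsto_atTop_of_meets {X Z Y : ℝ → ℝ → ℝ} (hX : ∀ a t, 0 ≤ t → a + t ≤ X t a)
    (hZ : ∀ b t, 0 ≤ t → Z t b ≤ b - t) (hY : ∀ t a, 0 ≤ t → X t a = Z t (Y t a)) (a : ℝ) :
    Tendsto (fun t => Y t a) atTop atTop :=
  tendsto_atTop_mono' _ ((eventually_ge_atTop 0).mono fun t ht =>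
      show a + 2 * t ≤ Y t a by linarith [hX a t ht, hZ (Y t a) t ht, hY t a ht])
    (tendsto_atTop_add_const_left _ a (tendsto_id.const_mul_atTop two_pos))

theorem false_of_forward_characteristics {k R : ℝ → ℝ} {ρ σ X Z Y : ℝ → ℝ → ℝ}
    (hk : IsWaveSpeed k) (hkc : Continuous k) {rp α d : ℝ} (hR : HasDerivAt R d α)
    (hRlim : Tendsto R atTop (𝓝 rp)) (hd : d * (R α + rp) < 0)
    (hX : ∀ a t, 0 ≤ t → HasDerivAt (fun s => X s a) (k (ρ t (X t a) - σ t (X t a))) t)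
    (hX0 : ∀ a, X 0 a = a)
    (hZ : ∀ b t, 0 ≤ t → HasDerivAt (fun s => Z s b) (-k (ρ t (Z t b) - σ t (Z t b))) t)
    (hZ0 : ∀ b, Z 0 b = b)
    (hρ : ∀ a t, 0 ≤ t → ρ t (X t a) = R a) (hσ : ∀ b t, 0 ≤ t → σ t (Z t b) = -R b)
    (hY : ∀ t a, 0 ≤ t → X t a = Z t (Y t a)) : False := by
  have hX_ge : ∀ a t, 0 ≤ t → a + t ≤ X t a := fun a t ht => by
    simpa only [hX0] using add_le_of_one_le_deriv (hX a) (fun s _ => hk.one_le _) ht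
  have hZ_le : ∀ b t, 0 ≤ t → Z t b ≤ b - t := fun b t ht => by
    have := add_le_of_one_le_deriv (fun s hs => (hZ b s hs).fun_neg)
      (fun s _ => by rw [neg_neg]; exact hk.one_le _) ht
    rw [hZ0] at this
    linarith
  have hspeed : ∀ a t, 0 ≤ t → HasDerivAt (fun s => X s a) (k (R a + R (Y t a))) t :=
    fun a t ht => by
      have := hX a t ht
      rwa [hρ a t ht, hY t a ht, hσ _ t ht, sub_neg_eq_add] at this
  have hlim (a : ℝ) : Tendsto (fun t => k (R a + R (Y t a))) atTop (𝓝 (k (R a + rp))) :=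
    (hkc.tendsto _).comp (tendsto_const_nhds.add
      (hRlim.comp (tendsto_atTop_of_meets hX_ge hZ_le hY a)))
  -- `(R · + rp) ^ 2` decreases at `α`
  obtain ⟨b, hαb, hb⟩ : ∃ b, α < b ∧ (R b + rp) ^ 2 < (R α + rp) ^ 2 :=
    exists_gt_lt_of_hasDerivAt_neg ((hR.add_const rp).pow 2) (by norm_num; nlinarith)
  have hb' : |R b + rp| < |R α + rp| := sq_lt_sq.1 hb
  obtain ⟨t, ht, hcross⟩ := exists_eq_of_tendsto_deriv_lt (hspeed α) (hspeed b) (hlim α)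
    (hlim b) (hk.lt_of_abs_lt hb') (by rwa [hX0, hX0])
  have : R α = R b := by rw [← hρ α t ht, ← hρ b t ht, hcross]
  rw [this] at hb'
  exact lt_irrefl _ hb'

theorem no_global_smooth_solution_general
    (k : ℝ → ℝ) (hk : ∀ u : ℝ, k (-(2 * L u)) = Real.sqrt (1 + u ^ 2))
    (hk1 : ContDiff ℝ 1 k)
    (r₀ : ℝ → ℝ) (hr₀ : ContDiff ℝ 1 r₀)
    (hcond :
      (∃ rp : ℝ, Tendsto r₀ atTop (nhds rp) ∧
        ∃ α : ℝ, deriv r₀ α * (r₀ α + rp) < 0) ∨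
      (∃ rm : ℝ, Tendsto r₀ atBot (nhds rm) ∧
        ∃ β : ℝ, deriv r₀ β * (r₀ β + rm) > 0)) :
    ¬ ∃ r l x₁ x₂ B A : ℝ → ℝ → ℝ,
      ContDiffOn ℝ 1 (fun p : ℝ × ℝ => (r p.1 p.2, l p.1 p.2))
          {p : ℝ × ℝ | 0 ≤ p.1} ∧
      (∀ t x : ℝ, 0 ≤ t →
        deriv (fun s => r s x) t + k (r t x - l t x) * deriv (fun y => r t y) x = 0 ∧
        deriv (fun s => l s x) t - k (r t x - l t x) * deriv (fun y => l t y) x = 0) ∧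
      (∀ x, r 0 x = r₀ x) ∧ (∀ x, l 0 x = -(r₀ x)) ∧
      (∀ (α t : ℝ), 0 ≤ t →
        HasDerivAt (fun s => x₁ s α) (k (r t (x₁ t α) - l t (x₁ t α))) t) ∧
      (∀ α, x₁ 0 α = α) ∧
      (∀ (β t : ℝ), 0 ≤ t →
        HasDerivAt (fun s => x₂ s β) (-(k (r t (x₂ t β) - l t (x₂ t β)))) t) ∧
      (∀ β, x₂ 0 β = β) ∧
      ContDiffOn ℝ 1 (fun p : ℝ × ℝ => x₁ p.1 p.2) {p : ℝ × ℝ | 0 ≤ p.1} ∧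
      ContDiffOn ℝ 1 (fun p : ℝ × ℝ => x₂ p.1 p.2) {p : ℝ × ℝ | 0 ≤ p.1} ∧
      ContinuousOn
        (fun p : ℝ × ℝ => deriv (fun s => deriv (fun a => x₁ s a) p.2) p.1)
        {p : ℝ × ℝ | 0 ≤ p.1} ∧
      ContinuousOn
        (fun p : ℝ × ℝ => deriv (fun s => deriv (fun b => x₂ s b) p.2) p.1)
        {p : ℝ × ℝ | 0 ≤ p.1} ∧
      ContDiffOn ℝ 1 (fun p : ℝ × ℝ => B p.1 p.2) {p : ℝ × ℝ | 0 ≤ p.1} ∧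
      ContDiffOn ℝ 1 (fun p : ℝ × ℝ => A p.1 p.2) {p : ℝ × ℝ | 0 ≤ p.1} ∧
      (∀ (t α : ℝ), 0 ≤ t → x₁ t α = x₂ t (B t α)) ∧
      (∀ (t β : ℝ), 0 ≤ t → x₂ t β = x₁ t (A t β)) := by
  rintro ⟨r, l, x₁, x₂, B, A, hC, hPDE, hr0, hl0, hx₁, hx₁0, hx₂, hx₂0, -, -, -, -, -, -, hB, hA⟩
  have hr : ∀ a t, 0 ≤ t → r t (x₁ t a) = r₀ a := fun a t ht => by
    rw [apply_curve_eq_of_transport (contDiff_fst.comp_contDiffOn hC) (hx₁ a)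
      (fun s hs => (hPDE s _ hs).1) ht, hx₁0, hr0]
  have hl : ∀ b t, 0 ≤ t → l t (x₂ t b) = -r₀ b := fun b t ht => by
    rw [apply_curve_eq_of_transport (contDiff_snd.comp_contDiffOn hC) (hx₂ b)
      (fun s hs => by linear_combination (hPDE s _ hs).2) ht, hx₂0, hl0]
  have hr₀' (x : ℝ) : HasDerivAt r₀ (deriv r₀ x) x := (hr₀.differentiable one_ne_zero x).hasDerivAt
  rcases hcond with ⟨rp, hrp, α, hα⟩ | ⟨rm, hrm, β, hβ⟩
  · exact false_of_forward_characteristics hk hk1.continuous (hr₀' α) hrp hα hx₁ hx₁0 hx₂ hx₂0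
      hr hl hB
  · -- the reflection `x ↦ -x` exchanges the roles of the two characteristic families
    refine false_of_forward_characteristics (R := fun x => r₀ (-x)) (ρ := fun t x => -l t (-x))
      (σ := fun t x => -r t (-x)) (X := fun t a => -x₂ t (-a)) (Z := fun t b => -x₁ t (-b))
      (Y := fun t a => -A t (-a)) hk hk1.continuous (α := -β)
      (by simpa [Function.comp_def] using (hr₀' _).comp (-β) (hasDerivAt_neg (-β)))
      (hrm.comp tendsto_neg_atTop_atBot) (by simp only [neg_neg]; linarith)
      (fun a t ht => by simpa only [neg_neg, neg_sub_neg] using (hx₂ (-a) t ht).fun_neg)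
      (by simp [hx₂0])
      (fun b t ht => by simpa only [neg_neg, neg_sub_neg] using (hx₁ (-b) t ht).fun_neg)
      (by simp [hx₁0]) (fun a t ht => by simp [hl _ t ht]) (fun b t ht => by simp [hr _ t ht])
      (fun t a ht => by simp [hA t (-a) ht])

/-- under the breakdown condition on the initial Riemann invariant `r₀`,
the diagonal system admits no global C¹ solution on `[0,∞)×ℝ` equipped with C¹
characteristic families and C¹ intersection functions. -/
theorem no_global_smooth_solution
    (k : ℝ → ℝ) (hk : ∀ u : ℝ, k (-(2 * L u)) = Real.sqrt (1 + u ^ 2))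
    (hk1 : ContDiff ℝ 1 k)
    (r₀ : ℝ → ℝ) (hr₀ : ContDiff ℝ 1 r₀)
    (hr₀b : ∃ C : ℝ, ∀ x, |r₀ x| ≤ C) (hr₀'b : ∃ C : ℝ, ∀ x, |deriv r₀ x| ≤ C)
    (hcond :
      (∃ rp : ℝ, Tendsto r₀ atTop (nhds rp) ∧
        ∃ α : ℝ, deriv r₀ α * (r₀ α + rp) < 0) ∨
      (∃ rm : ℝ, Tendsto r₀ atBot (nhds rm) ∧
        ∃ β : ℝ, deriv r₀ β * (r₀ β + rm) > 0)) :
    ¬ ∃ r l x₁ x₂ B A : ℝ → ℝ → ℝ,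
      ContDiffOn ℝ 1 (fun p : ℝ × ℝ => (r p.1 p.2, l p.1 p.2))
          {p : ℝ × ℝ | 0 ≤ p.1} ∧
      (∀ t x : ℝ, 0 ≤ t →
        deriv (fun s => r s x) t + k (r t x - l t x) * deriv (fun y => r t y) x = 0 ∧
        deriv (fun s => l s x) t - k (r t x - l t x) * deriv (fun y => l t y) x = 0) ∧
      (∀ x, r 0 x = r₀ x) ∧ (∀ x, l 0 x = -(r₀ x)) ∧
      (∀ (α t : ℝ), 0 ≤ t →
        HasDerivAt (fun s => x₁ s α) (k (r t (x₁ t α) - l t (x₁ t α))) t) ∧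
      (∀ α, x₁ 0 α = α) ∧
      (∀ (β t : ℝ), 0 ≤ t →
        HasDerivAt (fun s => x₂ s β) (-(k (r t (x₂ t β) - l t (x₂ t β)))) t) ∧
      (∀ β, x₂ 0 β = β) ∧
      ContDiffOn ℝ 1 (fun p : ℝ × ℝ => x₁ p.1 p.2) {p : ℝ × ℝ | 0 ≤ p.1} ∧
      ContDiffOn ℝ 1 (fun p : ℝ × ℝ => x₂ p.1 p.2) {p : ℝ × ℝ | 0 ≤ p.1} ∧
      ContinuousOn
        (fun p : ℝ × ℝ => deriv (fun s => deriv (fun a => x₁ s a) p.2) p.1)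
        {p : ℝ × ℝ | 0 ≤ p.1} ∧
      ContinuousOn
        (fun p : ℝ × ℝ => deriv (fun s => deriv (fun b => x₂ s b) p.2) p.1)
        {p : ℝ × ℝ | 0 ≤ p.1} ∧
      ContDiffOn ℝ 1 (fun p : ℝ × ℝ => B p.1 p.2) {p : ℝ × ℝ | 0 ≤ p.1} ∧
      ContDiffOn ℝ 1 (fun p : ℝ × ℝ => A p.1 p.2) {p : ℝ × ℝ | 0 ≤ p.1} ∧
      (∀ (t α : ℝ), 0 ≤ t → x₁ t α = x₂ t (B t α)) ∧
      (∀ (t β : ℝ), 0 ≤ t → x₂ t β = x₁ t (A t β)) :=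
  no_global_smooth_solution_general k hk hk1 r₀ hr₀ hcond
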